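/- arXiv:1712.05920 — 3 statements merged into one kernel-verified Lean document; each statement's English description precedes it below -/
import Mathlib

section
/- The set C_BSE(Δ(A)) of BSE-functions on Δ(A), equipped with pointwise operations, is a subalgebra of C_b(Δ(A)), and the BSE-norm ‖σ‖_BSE (the infimum of admissible constants C) is a complete algebra norm on it. -/
/-!
Admissible BSE constants add and scale. For products, `∑ cᵢ τ(φᵢ) φᵢ` evaluated at `a` is
`∑ cᵢ φᵢ(a) τ(φᵢ)`, and `‖∑ cᵢ φᵢ(a) φᵢ‖ ≤ ‖a‖ ‖∑ cᵢ φᵢ‖` because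
`(∑ cᵢ φᵢ(a) φᵢ)(b) = (∑ cᵢ φᵢ)(ab)`; hence `‖∑ cᵢ τ(φᵢ) φᵢ‖ ≤ ‖τ‖_BSE ‖∑ cᵢ φᵢ‖` and
`‖στ‖_BSE ≤ ‖σ‖_BSE ‖τ‖_BSE`. Testing with a single character, which has norm at most `1`, gives
`‖σ‖_∞ ≤ ‖σ‖_BSE`: the BSE norm is definite and a `‖·‖_BSE`-Cauchy sequence converges uniformly.
Admissible constants survive pointwise limits, so the uniform limit is BSE and the sequence
converges to it in the BSE norm.
-/

open WeakDual Filter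

variable {A : Type*} [NonUnitalNormedCommRing A] [NormedSpace ℂ A]
  [IsScalarTower ℂ A A] [SMulCommClass ℂ A A] [CompleteSpace A]

/-- The BSE inequality for a function on the character space of `A`. -/
def IsBSE (σ : WeakDual.characterSpace ℂ A → ℂ) : Prop :=
  ∃ C > (0 : ℝ), ∀ (n : ℕ) (φ : Fin n → WeakDual.characterSpace ℂ A) (c : Fin n → ℂ),
    ‖∑ i, c i * σ (φ i)‖ ≤
      C * ‖WeakDual.toStrongDual (∑ i, c i • ((φ i : WeakDual ℂ A)))‖

/-- The BSE norm: the infimum of admissible constants. -/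
noncomputable def bseNorm (σ : WeakDual.characterSpace ℂ A → ℂ) : ℝ :=
  sInf {C : ℝ | 0 < C ∧ ∀ (n : ℕ) (φ : Fin n → WeakDual.characterSpace ℂ A) (c : Fin n → ℂ),
    ‖∑ i, c i * σ (φ i)‖ ≤
      C * ‖WeakDual.toStrongDual (∑ i, c i • ((φ i : WeakDual ℂ A)))‖}

open Topology
open scoped BoundedContinuousFunction

lemma le_of_forall_pow_le_mul_pow {x y M : ℝ} (hy : 0 ≤ y)
    (h : ∀ n : ℕ, x ^ n ≤ M * y ^ n) : x ≤ y := by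
  by_contra! hyx
  have hx0 : 0 < x := hy.trans_lt hyx
  have hratio : Tendsto (fun n : ℕ => M * (y / x) ^ n) atTop (𝓝 0) := by
    simpa using (tendsto_pow_atTop_nhds_zero_of_lt_one (div_nonneg hy hx0.le)
      ((div_lt_one hx0).2 hyx)).const_mul M
  obtain ⟨n, hn⟩ := (hratio.eventually (gt_mem_nhds one_pos)).exists
  have hxn : x ^ n ≤ M * (y / x) ^ n * x ^ n := by
    rw [div_pow, mul_assoc, div_mul_cancel₀ _ (pow_pos hx0 n).ne']
    exact h n
  nlinarith [pow_pos hx0 n]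

namespace WeakDual.CharacterSpace

variable {𝕜 A : Type*} [NontriviallyNormedField 𝕜] [NonUnitalNormedRing A] [NormedSpace 𝕜 A]

lemma exists_apply_eq_pow_and_norm_le (φ : characterSpace 𝕜 A) (a : A) (n : ℕ) :
    ∃ b : A, φ b = φ a ^ (n + 1) ∧ ‖b‖ ≤ ‖a‖ ^ (n + 1) := by
  induction n with
  | zero => exact ⟨a, by simp, by simp⟩
  | succ n ih =>
    obtain ⟨b, hφb, hb⟩ := ih
    refine ⟨a * b, by rw [map_mul, hφb, pow_succ' (φ a) (n + 1)], ?_⟩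
    calc ‖a * b‖ ≤ ‖a‖ * ‖b‖ := norm_mul_le a b
      _ ≤ ‖a‖ * ‖a‖ ^ (n + 1) := by gcongr
      _ = ‖a‖ ^ (n + 1 + 1) := (pow_succ' _ _).symm

-- Without a unit there is no spectrum to invoke; the bound comes from `|φ a|ⁿ ≤ ‖φ‖ ‖a‖ⁿ`.
lemma norm_apply_le (φ : characterSpace 𝕜 A) (a : A) : ‖φ a‖ ≤ ‖a‖ := by
  refine le_of_forall_pow_le_mul_pow (norm_nonneg _)
    (M := max ‖toStrongDual (φ : WeakDual 𝕜 A)‖ 1) fun n => ?_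
  cases n with
  | zero => simp
  | succ n =>
    obtain ⟨b, hφb, hb⟩ := exists_apply_eq_pow_and_norm_le φ a n
    calc ‖φ a‖ ^ (n + 1) = ‖toStrongDual (φ : WeakDual 𝕜 A) b‖ := by
          rw [← norm_pow, ← hφb]; rfl
      _ ≤ ‖toStrongDual (φ : WeakDual 𝕜 A)‖ * ‖b‖ := ContinuousLinearMap.le_opNorm _ _
      _ ≤ max ‖toStrongDual (φ : WeakDual 𝕜 A)‖ 1 * ‖a‖ ^ (n + 1) := by
          gcongr; exact le_max_left _ _

lemma norm_le_one (φ : characterSpace 𝕜 A) : ‖toStrongDual (φ : WeakDual 𝕜 A)‖ ≤ 1 :=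
  ContinuousLinearMap.opNorm_le_bound _ zero_le_one fun a => by
    simpa using norm_apply_le φ a

end WeakDual.CharacterSpace

section IsBSEBound

variable {A : Type*} [NonUnitalNormedRing A] [NormedSpace ℂ A]

def IsBSEBound (σ : characterSpace ℂ A → ℂ) (C : ℝ) : Prop :=
  ∀ (n : ℕ) (φ : Fin n → characterSpace ℂ A) (c : Fin n → ℂ),
    ‖∑ i, c i * σ (φ i)‖ ≤ C * ‖toStrongDual (∑ i, c i • ((φ i : WeakDual ℂ A)))‖

lemma toStrongDual_sum_smul_apply {n : ℕ} (φ : Fin n → characterSpace ℂ A) (c : Fin n → ℂ)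
    (a : A) : toStrongDual (∑ i, c i • (φ i : WeakDual ℂ A)) a = ∑ i, c i * φ i a := by
  simp only [map_sum, map_smul, sum_apply, smul_apply, smul_eq_mul]
  rfl

lemma norm_toStrongDual_sum_mul_apply_smul_le {n : ℕ} (φ : Fin n → characterSpace ℂ A)
    (c : Fin n → ℂ) (a : A) :
    ‖toStrongDual (∑ i, (c i * φ i a) • (φ i : WeakDual ℂ A))‖ ≤
      ‖toStrongDual (∑ i, c i • (φ i : WeakDual ℂ A))‖ * ‖a‖ := by
  refine ContinuousLinearMap.opNorm_le_bound _ (by positivity) fun b => ?_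
  have hshift : toStrongDual (∑ i, (c i * φ i a) • (φ i : WeakDual ℂ A)) b =
      toStrongDual (∑ i, c i • (φ i : WeakDual ℂ A)) (a * b) := by
    simp only [toStrongDual_sum_smul_apply, map_mul, mul_assoc]
  rw [hshift, mul_assoc]
  exact (ContinuousLinearMap.le_opNorm _ _).trans (by gcongr; exact norm_mul_le a b)

namespace IsBSEBound

variable {σ τ : characterSpace ℂ A → ℂ} {B C : ℝ}

lemma mono (hσ : IsBSEBound σ B) (hBC : B ≤ C) : IsBSEBound σ C :=
  fun n φ c => (hσ n φ c).trans (by gcongr)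

lemma norm_apply_le (hσ : IsBSEBound σ C) (hC : 0 ≤ C) (φ : characterSpace ℂ A) :
    ‖σ φ‖ ≤ C := by
  have h := hσ 1 (fun _ => φ) (fun _ => 1)
  simp only [Finset.univ_unique, Finset.sum_singleton, one_mul, one_smul] at h
  exact h.trans (mul_le_of_le_one_right hC (CharacterSpace.norm_le_one φ))

lemma add (hσ : IsBSEBound σ B) (hτ : IsBSEBound τ C) : IsBSEBound (σ + τ) (B + C) := by
  intro n φ c
  simp only [Pi.add_apply, mul_add, Finset.sum_add_distrib, add_mul]
  exact (norm_add_le _ _).trans (add_le_add (hσ n φ c) (hτ n φ c))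

lemma smul (hσ : IsBSEBound σ C) (r : ℂ) : IsBSEBound (r • σ) (‖r‖ * C) := by
  intro n φ c
  simp only [Pi.smul_apply, smul_eq_mul, mul_left_comm _ r, ← Finset.mul_sum, norm_mul,
    mul_assoc]
  gcongr
  exact hσ n φ c

lemma neg (hσ : IsBSEBound σ C) : IsBSEBound (-σ) C := by
  simpa using hσ.smul (-1)

lemma norm_toStrongDual_sum_le (hτ : IsBSEBound τ C) (hC : 0 ≤ C) {n : ℕ}
    (φ : Fin n → characterSpace ℂ A) (c : Fin n → ℂ) :
    ‖toStrongDual (∑ i, (c i * τ (φ i)) • (φ i : WeakDual ℂ A))‖ ≤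
      C * ‖toStrongDual (∑ i, c i • (φ i : WeakDual ℂ A))‖ := by
  refine ContinuousLinearMap.opNorm_le_bound _ (by positivity) fun a => ?_
  have hswap : ∑ i, c i * τ (φ i) * φ i a = ∑ i, c i * φ i a * τ (φ i) :=
    Finset.sum_congr rfl fun _ _ => mul_right_comm _ _ _
  rw [toStrongDual_sum_smul_apply, hswap, mul_assoc]
  exact (hτ n φ _).trans (by gcongr; exact norm_toStrongDual_sum_mul_apply_smul_le φ c a)

lemma mul (hσ : IsBSEBound σ B) (hB : 0 ≤ B) (hτ : IsBSEBound τ C) (hC : 0 ≤ C) :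
    IsBSEBound (σ * τ) (B * C) := by
  intro n φ c
  have hregroup : ∑ i, c i * (σ * τ) (φ i) = ∑ i, c i * τ (φ i) * σ (φ i) :=
    Finset.sum_congr rfl fun _ _ => by simp only [Pi.mul_apply]; ring
  rw [hregroup, mul_assoc]
  exact (hσ n φ _).trans (by gcongr; exact hτ.norm_toStrongDual_sum_le hC φ c)

lemma of_forall_lt (h : ∀ D > C, IsBSEBound σ D) : IsBSEBound σ C := by
  intro n φ c
  have hlim : Tendsto (· * ‖toStrongDual (∑ i, c i • (φ i : WeakDual ℂ A))‖) (𝓝[>] C)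
      (𝓝 (C * ‖toStrongDual (∑ i, c i • (φ i : WeakDual ℂ A))‖)) :=
    ((continuous_mul_const _).tendsto C).mono_left nhdsWithin_le_nhds
  exact ge_of_tendsto hlim (eventually_nhdsWithin_of_forall fun D hD => h D hD n φ c)

lemma of_tendsto {ι : Type*} {l : Filter ι} [l.NeBot] {f : ι → characterSpace ℂ A → ℂ}
    (hf : ∀ᶠ m in l, IsBSEBound (f m) C) (hlim : Tendsto f l (𝓝 σ)) : IsBSEBound σ C := by
  intro n φ c
  have hsum : Tendsto (fun m => ∑ i, c i * f m (φ i)) l (𝓝 (∑ i, c i * σ (φ i))) :=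
    tendsto_finsetSum _ fun i _ => ((continuous_apply (φ i)).tendsto σ |>.comp hlim).const_mul _
  exact le_of_tendsto hsum.norm (hf.mono fun m hm => hm n φ c)

end IsBSEBound

end IsBSEBound

section IsBSE

variable {A : Type*} [NonUnitalNormedCommRing A] [NormedSpace ℂ A]
  {σ τ : characterSpace ℂ A → ℂ} {C : ℝ}

lemma IsBSEBound.isBSE (h : IsBSEBound σ C) : IsBSE σ :=
  ⟨max C 1, by positivity, h.mono (le_max_left _ _)⟩

lemma bseNorm_nonneg (σ : characterSpace ℂ A → ℂ) : 0 ≤ bseNorm σ :=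
  Real.sInf_nonneg fun _ hC => hC.1.le

lemma bseNorm_le (hC : 0 ≤ C) (h : IsBSEBound σ C) : bseNorm σ ≤ C := by
  refine le_of_forall_pos_le_add fun ε hε => csInf_le ⟨0, fun _ hD => hD.1.le⟩ ?_
  exact ⟨by positivity, h.mono (le_add_of_nonneg_right hε.le)⟩

lemma IsBSE.isBSEBound_bseNorm (h : IsBSE σ) : IsBSEBound σ (bseNorm σ) := by
  obtain ⟨C₀, hC₀, h₀⟩ := h
  refine IsBSEBound.of_forall_lt fun D hD => ?_
  obtain ⟨C, ⟨-, hC⟩, hCD⟩ :=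
    exists_lt_of_csInf_lt (s := {C | 0 < C ∧ IsBSEBound σ C}) ⟨C₀, hC₀, h₀⟩ hD
  exact IsBSEBound.mono hC hCD.le

lemma isBSE_zero : IsBSE (0 : characterSpace ℂ A → ℂ) :=
  IsBSEBound.isBSE (C := 0) fun n φ c => by simp

lemma bseNorm_zero : bseNorm (0 : characterSpace ℂ A → ℂ) = 0 :=
  (bseNorm_le le_rfl fun n φ c => by simp).antisymm (bseNorm_nonneg _)

lemma IsBSE.add (hσ : IsBSE σ) (hτ : IsBSE τ) : IsBSE (σ + τ) :=
  (hσ.isBSEBound_bseNorm.add hτ.isBSEBound_bseNorm).isBSE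

lemma IsBSE.smul (hσ : IsBSE σ) (r : ℂ) : IsBSE (r • σ) :=
  (hσ.isBSEBound_bseNorm.smul r).isBSE

lemma IsBSE.sub (hσ : IsBSE σ) (hτ : IsBSE τ) : IsBSE (σ - τ) :=
  sub_eq_add_neg σ τ ▸ (hσ.isBSEBound_bseNorm.add hτ.isBSEBound_bseNorm.neg).isBSE

lemma IsBSE.mul (hσ : IsBSE σ) (hτ : IsBSE τ) : IsBSE (σ * τ) :=
  (hσ.isBSEBound_bseNorm.mul (bseNorm_nonneg σ) hτ.isBSEBound_bseNorm (bseNorm_nonneg τ)).isBSE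

lemma bseNorm_add_le (hσ : IsBSE σ) (hτ : IsBSE τ) : bseNorm (σ + τ) ≤ bseNorm σ + bseNorm τ :=
  bseNorm_le (by positivity [bseNorm_nonneg σ, bseNorm_nonneg τ])
    (hσ.isBSEBound_bseNorm.add hτ.isBSEBound_bseNorm)

lemma bseNorm_smul_le (hσ : IsBSE σ) (r : ℂ) : bseNorm (r • σ) ≤ ‖r‖ * bseNorm σ :=
  bseNorm_le (mul_nonneg (norm_nonneg r) (bseNorm_nonneg σ)) (hσ.isBSEBound_bseNorm.smul r)

lemma bseNorm_smul (hσ : IsBSE σ) (r : ℂ) : bseNorm (r • σ) = ‖r‖ * bseNorm σ := by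
  rcases eq_or_ne r 0 with rfl | hr
  · rw [zero_smul, bseNorm_zero, norm_zero, zero_mul]
  refine (bseNorm_smul_le hσ r).antisymm ?_
  have hinv := bseNorm_smul_le (hσ.smul r) r⁻¹
  rw [smul_smul, inv_mul_cancel₀ hr, one_smul, norm_inv] at hinv
  rwa [← le_inv_mul_iff₀ (norm_pos_iff.2 hr)]

lemma bseNorm_mul_le (hσ : IsBSE σ) (hτ : IsBSE τ) : bseNorm (σ * τ) ≤ bseNorm σ * bseNorm τ :=
  bseNorm_le (mul_nonneg (bseNorm_nonneg σ) (bseNorm_nonneg τ))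
    (hσ.isBSEBound_bseNorm.mul (bseNorm_nonneg σ) hτ.isBSEBound_bseNorm (bseNorm_nonneg τ))

lemma norm_le_bseNorm {σ : characterSpace ℂ A →ᵇ ℂ} (hσ : IsBSE ⇑σ) : ‖σ‖ ≤ bseNorm ⇑σ :=
  (BoundedContinuousFunction.norm_le (bseNorm_nonneg _)).2
    (hσ.isBSEBound_bseNorm.norm_apply_le (bseNorm_nonneg _))

lemma bseNorm_eq_zero_iff {σ : characterSpace ℂ A →ᵇ ℂ} (hσ : IsBSE ⇑σ) :
    bseNorm ⇑σ = 0 ↔ σ = 0 :=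
  ⟨fun h => norm_le_zero_iff.1 (h ▸ norm_le_bseNorm hσ), fun h => h ▸ bseNorm_zero⟩

variable (A) in
def bseSubalgebra : NonUnitalSubalgebra ℂ (characterSpace ℂ A →ᵇ ℂ) where
  carrier := {σ | IsBSE ⇑σ}
  add_mem' := IsBSE.add
  zero_mem' := isBSE_zero
  mul_mem' := IsBSE.mul
  smul_mem' r _ hσ := hσ.smul r

section Completeness

variable {f : ℕ → characterSpace ℂ A →ᵇ ℂ}

lemma cauchySeq_of_bseNorm (hf : ∀ n, IsBSE ⇑(f n))
    (hCauchy : ∀ ε > (0 : ℝ), ∃ N : ℕ, ∀ m ≥ N, ∀ n ≥ N, bseNorm ⇑(f m - f n) < ε) :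
    CauchySeq f := by
  refine Metric.cauchySeq_iff.2 fun ε hε => (hCauchy ε hε).imp fun _ hN m hm n hn => ?_
  have hsub : IsBSE ⇑(f m - f n) := (hf m).sub (hf n)
  rw [dist_eq_norm]
  exact (norm_le_bseNorm hsub).trans_lt (hN m hm n hn)

lemma exists_isBSE_tendsto_bseNorm_sub (hf : ∀ n, IsBSE ⇑(f n))
    (hCauchy : ∀ ε > (0 : ℝ), ∃ N : ℕ, ∀ m ≥ N, ∀ n ≥ N, bseNorm ⇑(f m - f n) < ε) :
    ∃ g : characterSpace ℂ A →ᵇ ℂ,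
      IsBSE ⇑g ∧ Tendsto (fun n => bseNorm ⇑(f n - g)) atTop (𝓝 0) := by
  obtain ⟨g, hg⟩ := cauchySeq_tendsto_of_complete (cauchySeq_of_bseNorm hf hCauchy)
  have hbound : ∀ ε > (0 : ℝ), ∃ N, ∀ n ≥ N, IsBSEBound ⇑(f n - g) ε := by
    intro ε hε
    obtain ⟨N, hN⟩ := hCauchy ε hε
    refine ⟨N, fun n hn => IsBSEBound.of_tendsto (f := fun m => ⇑(f n - f m)) ?_
      ((BoundedContinuousFunction.continuous_coe.tendsto _).comp (tendsto_const_nhds.sub hg))⟩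
    filter_upwards [eventually_ge_atTop N] with m hm
    exact ((hf n).sub (hf m)).isBSEBound_bseNorm.mono (hN n hn m hm).le
  obtain ⟨N, hN⟩ := hbound 1 one_pos
  refine ⟨g, by simpa using (hf N).sub (hN N le_rfl).isBSE, Metric.tendsto_atTop.2 fun ε hε => ?_⟩
  obtain ⟨M, hM⟩ := hbound (ε / 2) (half_pos hε)
  refine ⟨M, fun n hn => ?_⟩
  rw [Real.dist_0_eq_abs, abs_of_nonneg (bseNorm_nonneg _)]
  exact (bseNorm_le (half_pos hε).le (hM n hn)).trans_lt (half_lt_self hε)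

end Completeness

end IsBSE

theorem bse_subalgebra_and_complete_algebra_norm_general :
    (∃ S : NonUnitalSubalgebra ℂ
        (BoundedContinuousFunction (WeakDual.characterSpace ℂ A) ℂ),
      (S : Set (BoundedContinuousFunction (WeakDual.characterSpace ℂ A) ℂ)) =
        {σ : BoundedContinuousFunction (WeakDual.characterSpace ℂ A) ℂ | IsBSE (⇑σ)}) ∧
    (∀ σ : BoundedContinuousFunction (WeakDual.characterSpace ℂ A) ℂ,
      IsBSE (⇑σ) → 0 ≤ bseNorm (⇑σ)) ∧
    (∀ σ : BoundedContinuousFunction (WeakDual.characterSpace ℂ A) ℂ,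
      IsBSE (⇑σ) → (bseNorm (⇑σ) = 0 ↔ σ = 0)) ∧
    (∀ σ τ : BoundedContinuousFunction (WeakDual.characterSpace ℂ A) ℂ,
      IsBSE (⇑σ) → IsBSE (⇑τ) → bseNorm (⇑(σ + τ)) ≤ bseNorm (⇑σ) + bseNorm (⇑τ)) ∧
    (∀ (c : ℂ) (σ : BoundedContinuousFunction (WeakDual.characterSpace ℂ A) ℂ),
      IsBSE (⇑σ) → bseNorm (⇑(c • σ)) = ‖c‖ * bseNorm (⇑σ)) ∧
    (∀ σ τ : BoundedContinuousFunction (WeakDual.characterSpace ℂ A) ℂ,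
      IsBSE (⇑σ) → IsBSE (⇑τ) → bseNorm (⇑(σ * τ)) ≤ bseNorm (⇑σ) * bseNorm (⇑τ)) ∧
    (∀ f : ℕ → BoundedContinuousFunction (WeakDual.characterSpace ℂ A) ℂ,
      (∀ n, IsBSE (⇑(f n))) →
      (∀ ε > (0 : ℝ), ∃ N : ℕ, ∀ m ≥ N, ∀ n ≥ N, bseNorm (⇑(f m - f n)) < ε) →
      ∃ g : BoundedContinuousFunction (WeakDual.characterSpace ℂ A) ℂ, IsBSE (⇑g) ∧
        Tendsto (fun n => bseNorm (⇑(f n - g))) atTop (nhds 0)) := by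
  exact ⟨⟨bseSubalgebra A, rfl⟩, fun σ _ => bseNorm_nonneg σ, fun _ => bseNorm_eq_zero_iff,
    fun _ _ => bseNorm_add_le, fun c _ hσ => bseNorm_smul hσ c, fun _ _ => bseNorm_mul_le,
    fun _ => exists_isBSE_tendsto_bseNorm_sub⟩

/-- the BSE-functions form a (non-unital) subalgebra of
`C_b(Δ(A))`, and the BSE-norm is a complete algebra norm on this subalgebra. -/
theorem bse_subalgebra_and_complete_algebra_norm
    (hss : ∀ a : A, (∀ φ : WeakDual.characterSpace ℂ A, φ a = 0) → a = 0) :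
    (∃ S : NonUnitalSubalgebra ℂ
        (BoundedContinuousFunction (WeakDual.characterSpace ℂ A) ℂ),
      (S : Set (BoundedContinuousFunction (WeakDual.characterSpace ℂ A) ℂ)) =
        {σ : BoundedContinuousFunction (WeakDual.characterSpace ℂ A) ℂ | IsBSE (⇑σ)}) ∧
    (∀ σ : BoundedContinuousFunction (WeakDual.characterSpace ℂ A) ℂ,
      IsBSE (⇑σ) → 0 ≤ bseNorm (⇑σ)) ∧
    (∀ σ : BoundedContinuousFunction (WeakDual.characterSpace ℂ A) ℂ,
      IsBSE (⇑σ) → (bseNorm (⇑σ) = 0 ↔ σ = 0)) ∧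
    (∀ σ τ : BoundedContinuousFunction (WeakDual.characterSpace ℂ A) ℂ,
      IsBSE (⇑σ) → IsBSE (⇑τ) → bseNorm (⇑(σ + τ)) ≤ bseNorm (⇑σ) + bseNorm (⇑τ)) ∧
    (∀ (c : ℂ) (σ : BoundedContinuousFunction (WeakDual.characterSpace ℂ A) ℂ),
      IsBSE (⇑σ) → bseNorm (⇑(c • σ)) = ‖c‖ * bseNorm (⇑σ)) ∧
    (∀ σ τ : BoundedContinuousFunction (WeakDual.characterSpace ℂ A) ℂ,
      IsBSE (⇑σ) → IsBSE (⇑τ) → bseNorm (⇑(σ * τ)) ≤ bseNorm (⇑σ) * bseNorm (⇑τ)) ∧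
    (∀ f : ℕ → BoundedContinuousFunction (WeakDual.characterSpace ℂ A) ℂ,
      (∀ n, IsBSE (⇑(f n))) →
      (∀ ε > (0 : ℝ), ∃ N : ℕ, ∀ m ≥ N, ∀ n ≥ N, bseNorm (⇑(f m - f n)) < ε) →
      ∃ g : BoundedContinuousFunction (WeakDual.characterSpace ℂ A) ℂ, IsBSE (⇑g) ∧
        Tendsto (fun n => bseNorm (⇑(f n - g))) atTop (nhds 0)) :=
  bse_subalgebra_and_complete_algebra_norm_general
end

section
/- (Helly's theorem) Let X be a complex normed space, x₁*,...,xₙ* ∈ X*, c₁,...,cₙ ∈ ℂ, and M > 0. Then the following are equivalent: (1) for every ε > 0 there exists x_ε ∈ X with ‖x_ε‖ ≤ M + ε and x_k*(x_ε) = c_k for k = 1,...,n; (2) for all a₁,...,aₙ ∈ ℂ, |Σ aᵢcᵢ| ≤ M‖Σ aᵢxᵢ*‖_{X*}. -/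
/-!
(1) ⇒ (2): with `f = ∑ aᵢ xᵢ*`, `|∑ aᵢ cᵢ| = |f x_ε| ≤ ‖f‖ (M + ε)`; let `ε → 0`.
(2) ⇒ (1): (2) first forces `c` into the range of `x ↦ (xₖ*(x))ₖ`: a linear relation among the
`xₖ*` must also hold among the `cₖ`. For any `x₀` in the preimage, Hahn–Banach on
`X ⧸ ⋂ ker xₖ*` gives a functional of norm `≤ 1` vanishing on `⋂ ker xₖ*` and taking the
value `‖[x₀]‖` at `x₀`; such a functional is a combination `∑ aᵢ xᵢ*`, so (2) bounds the quotient
norm `‖[x₀]‖` by `M`, and a near-optimal representative of `[x₀]` is the required `x_ε`.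
-/

section LinearAlgebra

variable {𝕜 E ι : Type*} [NormedField 𝕜] [SeminormedAddCommGroup E] [NormedSpace 𝕜 E] [Fintype ι]

theorem exists_sum_smul_eq_of_forall_apply_eq_zero {x : ι → E →L[𝕜] 𝕜} {f : E →L[𝕜] 𝕜}
    (h : ∀ y, (∀ i, x i y = 0) → f y = 0) : ∃ a : ι → 𝕜, ∑ i, a i • x i = f := by
  have hker : ⨅ i, LinearMap.ker (x i : E →ₗ[𝕜] 𝕜) ≤ LinearMap.ker (f : E →ₗ[𝕜] 𝕜) :=
    fun y hy => h y (by simpa using hy)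
  obtain ⟨a, ha⟩ :=
    (Submodule.mem_span_range_iff_exists_fun 𝕜).mp (mem_span_of_iInf_ker_le_ker hker)
  exact ⟨a, ContinuousLinearMap.coe_injective (by simpa using ha)⟩

theorem exists_forall_apply_eq_of_sum_smul_eq_zero {x : ι → E →L[𝕜] 𝕜} {c : ι → 𝕜}
    (h : ∀ a : ι → 𝕜, ∑ i, a i • x i = 0 → ∑ i, a i * c i = 0) : ∃ y, ∀ i, x i y = c i := by
  set T : E →ₗ[𝕜] ι → 𝕜 := LinearMap.pi fun i => (x i : E →ₗ[𝕜] 𝕜)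
  suffices c ∈ LinearMap.range T by
    obtain ⟨y, hy⟩ := this
    exact ⟨y, fun i => congr_fun hy i⟩
  classical
  by_contra hc
  obtain ⟨φ, hφc, hφrange⟩ := Submodule.exists_dual_map_eq_bot_of_notMem hc inferInstance
  set a : ι → 𝕜 := fun i => φ fun j => if i = j then 1 else 0
  have hφ : ∀ v, φ v = ∑ i, v i * a i := LinearMap.pi_apply_eq_sum_univ φ
  have hφT : ∀ y, φ (T y) = 0 := fun y =>
    LinearMap.le_ker_iff_map.mpr hφrange (LinearMap.mem_range_self T y)
  refine hφc ?_
  rw [hφ, ← h a]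
  · simp only [mul_comm]
  · ext y
    simpa [hφ, T, mul_comm] using hφT y

end LinearAlgebra

section Normed

variable {𝕜 E F ι : Type*} [RCLike 𝕜] [SeminormedAddCommGroup E] [NormedSpace 𝕜 E] [Fintype ι]

theorem Submodule.exists_dual_vector_mk (N : Submodule 𝕜 E) (x : E) :
    ∃ g : StrongDual 𝕜 E,
      ‖g‖ ≤ 1 ∧ (∀ y ∈ N, g y = 0) ∧ g x = ‖(Submodule.Quotient.mk x : E ⧸ N)‖ := by
  obtain ⟨g, hg, hgx⟩ := exists_dual_vector'' 𝕜 (Submodule.Quotient.mk x : E ⧸ N)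
  have hmk : ‖N.mkQL‖ ≤ 1 :=
    ContinuousLinearMap.opNorm_le_bound _ zero_le_one fun y => by
      simpa using Submodule.Quotient.norm_mk_le N y
  refine ⟨g.comp N.mkQL, ?_, fun y hy => by simp [(Submodule.Quotient.mk_eq_zero N).mpr hy],
    by simpa using hgx⟩
  calc ‖g.comp N.mkQL‖ ≤ ‖g‖ * ‖N.mkQL‖ := g.opNorm_comp_le _
    _ ≤ 1 * 1 := by gcongr
    _ = 1 := one_mul 1

open Filter Topology in
theorem ContinuousLinearMap.norm_le_mul_opNorm_of_forall_exists [SeminormedAddCommGroup F]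
    [NormedSpace 𝕜 F] (f : E →L[𝕜] F) {b : F} {M : ℝ}
    (h : ∀ ε > 0, ∃ y, ‖y‖ ≤ M + ε ∧ f y = b) : ‖b‖ ≤ M * ‖f‖ := by
  have hb : ∀ ε > 0, ‖b‖ ≤ ‖f‖ * (M + ε) := fun ε hε => by
    obtain ⟨y, hy, rfl⟩ := h ε hε
    exact f.le_of_opNorm_le_of_le le_rfl hy
  have hlim : Tendsto (fun ε => ‖f‖ * (M + ε)) (𝓝[>] 0) (𝓝 (‖f‖ * M)) :=
    tendsto_nhdsWithin_of_tendsto_nhds <|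
      (show Continuous fun ε : ℝ => ‖f‖ * (M + ε) by fun_prop).tendsto' 0 _ (by simp)
  rw [mul_comm]
  exact ge_of_tendsto hlim (eventually_nhdsWithin_of_forall hb)

theorem norm_mk_le_of_forall_norm_sum_le (x : ι → StrongDual 𝕜 E)
    (x₀ : E) {M : ℝ} (hM : 0 ≤ M)
    (h : ∀ a : ι → 𝕜, ‖∑ i, a i * x i x₀‖ ≤ M * ‖∑ i, a i • x i‖) :
    ‖(Submodule.Quotient.mk x₀ : E ⧸ ⨅ i, LinearMap.ker (x i : E →ₗ[𝕜] 𝕜))‖ ≤ M := by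
  set N := ⨅ i, LinearMap.ker (x i : E →ₗ[𝕜] 𝕜)
  obtain ⟨g, hg, hgN, hgx⟩ := N.exists_dual_vector_mk x₀
  obtain ⟨a, rfl⟩ := exists_sum_smul_eq_of_forall_apply_eq_zero (x := x) (f := g)
    fun y hy => hgN y (by simpa [N, Submodule.mem_iInf] using hy)
  calc ‖(Submodule.Quotient.mk x₀ : E ⧸ N)‖ = ‖∑ i, a i * x i x₀‖ := by
        simpa using congr_arg norm hgx.symm
    _ ≤ M * ‖∑ i, a i • x i‖ := h a
    _ ≤ M * 1 := by gcongr
    _ = M := mul_one M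

theorem exists_norm_le_add_forall_apply_eq (x : ι → StrongDual 𝕜 E)
    (c : ι → 𝕜) {M : ℝ} (hM : 0 ≤ M)
    (h : ∀ a : ι → 𝕜, ‖∑ i, a i * c i‖ ≤ M * ‖∑ i, a i • x i‖) {ε : ℝ} (hε : 0 < ε) :
    ∃ y : E, ‖y‖ ≤ M + ε ∧ ∀ i, x i y = c i := by
  obtain ⟨x₀, hx₀⟩ := exists_forall_apply_eq_of_sum_smul_eq_zero (x := x) (c := c) fun a ha => by
    simpa [ha] using h a
  set N := ⨅ i, LinearMap.ker (x i : E →ₗ[𝕜] 𝕜)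
  have hx₀N : ‖(Submodule.Quotient.mk x₀ : E ⧸ N)‖ ≤ M :=
    norm_mk_le_of_forall_norm_sum_le x x₀ hM fun a => by simpa only [hx₀] using h a
  obtain ⟨y, hy, hyε⟩ := Submodule.Quotient.norm_mk_lt (Submodule.Quotient.mk x₀ : E ⧸ N) hε
  refine ⟨y, by linarith, fun i => ?_⟩
  have hi : x i y - x i x₀ = 0 := by
    simpa using (Submodule.mem_iInf _).mp ((Submodule.Quotient.eq N).mp hy) i
  rw [sub_eq_zero.mp hi, hx₀]

end Normed

/-- Helly's theorem: for a complex normed space `X`, functionals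
`x₁*, …, xₙ*`, scalars `c₁, …, cₙ` and `M > 0`, the following are equivalent:
(1) for every `ε > 0` there is `x_ε` with `‖x_ε‖ ≤ M + ε` and `xₖ*(x_ε) = cₖ` for all `k`;
(2) `|∑ aᵢ cᵢ| ≤ M ‖∑ aᵢ xᵢ*‖` for all scalars `a₁, …, aₙ`. -/
theorem helly {X : Type*} [NormedAddCommGroup X] [NormedSpace ℂ X]
    {n : ℕ} (x : Fin n → StrongDual ℂ X) (c : Fin n → ℂ) (M : ℝ) (hM : 0 < M) :
    (∀ ε > (0 : ℝ), ∃ xε : X, ‖xε‖ ≤ M + ε ∧ ∀ k, x k xε = c k) ↔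
      (∀ a : Fin n → ℂ, ‖∑ i, a i * c i‖ ≤ M * ‖∑ i, a i • x i‖) := by
  refine ⟨fun h a => ?_, fun h ε hε => exists_norm_le_add_forall_apply_eq x c hM.le h hε⟩
  refine (∑ i, a i • x i).norm_le_mul_opNorm_of_forall_exists fun ε hε => ?_
  obtain ⟨y, hy, hyc⟩ := h ε hε
  exact ⟨y, hy, by simp [hyc]⟩
end

section
/- If B is a Banach algebra containing a Banach algebra C as a two-sided ideal, then every character φ ∈ Δ(C) extends to a character φ̃ ∈ Δ(B). -/
/-!
Fix `c₀ ∈ C` with `φ c₀ = 1` and put `ψ b = φ (c₀ b)`. Since `C` is a left ideal, for `z ∈ C`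
we may insert `c₀` in front of `b z`: `φ (b z) = φ (c₀ b z) = ψ b · φ z`. Taking `z = c₀` gives
`ψ b = φ (b c₀)`, and then `ψ (x y) = φ (x (y c₀)) = ψ x · ψ y`.
-/

namespace NonUnitalSubalgebra

variable {𝕜 B : Type*} [Field 𝕜] [NonUnitalRing B] [Module 𝕜 B] [SMulCommClass 𝕜 B B]
  (C : NonUnitalSubalgebra 𝕜 B)

def extendCharacter (hRight : ∀ b : B, ∀ c ∈ C, c * b ∈ C) (φ : C →ₗ[𝕜] 𝕜) (c₀ : C) :
    B →ₗ[𝕜] 𝕜 :=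
  φ ∘ₗ (LinearMap.mulLeft 𝕜 (c₀ : B)).codRestrict C.toSubmodule fun b => hRight b c₀ c₀.2

variable {C} (hLeft : ∀ b : B, ∀ c ∈ C, b * c ∈ C) (hRight : ∀ b : B, ∀ c ∈ C, c * b ∈ C)
  {φ : C →ₗ[𝕜] 𝕜} (hφmul : ∀ x y : C, φ (x * y) = φ x * φ y) {c₀ : C} (hc₀ : φ c₀ = 1)

theorem extendCharacter_apply (b : B) :
    extendCharacter C hRight φ c₀ b = φ ⟨c₀ * b, hRight b c₀ c₀.2⟩ :=
  rfl

include hφmul hc₀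

theorem extendCharacter_coe (c : C) : extendCharacter C hRight φ c₀ c = φ c := by
  rw [extendCharacter_apply, ← one_mul (φ c), ← hc₀, ← hφmul]
  rfl

theorem extendCharacter_ne_zero : extendCharacter C hRight φ c₀ ≠ 0 := by
  refine ne_of_apply_ne (fun ψ => ψ c₀) ?_
  simp [extendCharacter_coe hRight hφmul hc₀, hc₀]

theorem apply_mul_mem_eq_extendCharacter_mul (b : B) (z : C) :
    φ ⟨b * z, hLeft b z z.2⟩ = extendCharacter C hRight φ c₀ b * φ z := by
  have hassoc : (c₀ * ⟨b * z, hLeft b z z.2⟩ : C) = ⟨c₀ * b, hRight b c₀ c₀.2⟩ * z :=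
    Subtype.ext (mul_assoc _ _ _).symm
  rw [extendCharacter_apply, ← hφmul, ← hassoc, hφmul, hc₀, one_mul]

theorem extendCharacter_eq_apply_mul (b : B) :
    extendCharacter C hRight φ c₀ b = φ ⟨b * c₀, hLeft b c₀ c₀.2⟩ := by
  rw [apply_mul_mem_eq_extendCharacter_mul hLeft hRight hφmul hc₀, hc₀, mul_one]

include hLeft in
theorem extendCharacter_mul (x y : B) :
    extendCharacter C hRight φ c₀ (x * y) =
      extendCharacter C hRight φ c₀ x * extendCharacter C hRight φ c₀ y := by
  have hassoc : (⟨x * y * c₀, hLeft _ c₀ c₀.2⟩ : C) = ⟨x * (y * c₀), hLeft x _ (hLeft y c₀ c₀.2)⟩ :=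
    Subtype.ext (mul_assoc _ _ _)
  rw [extendCharacter_eq_apply_mul hLeft hRight hφmul hc₀, hassoc,
    apply_mul_mem_eq_extendCharacter_mul hLeft hRight hφmul hc₀ x ⟨y * c₀, hLeft y c₀ c₀.2⟩,
    ← extendCharacter_eq_apply_mul hLeft hRight hφmul hc₀]

end NonUnitalSubalgebra

open NonUnitalSubalgebra in
theorem character_extends_from_ideal_general
    {B : Type*} [NormedRing B] [NormedAlgebra ℂ B]
    (C : NonUnitalSubalgebra ℂ B)
    (hIdeal : ∀ b : B, ∀ c ∈ C, b * c ∈ C ∧ c * b ∈ C)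
    (φ : C →ₗ[ℂ] ℂ) (hφmul : ∀ x y : C, φ (x * y) = φ x * φ y) (hφne : φ ≠ 0) :
    ∃ ψ : B →ₗ[ℂ] ℂ, (∀ x y : B, ψ (x * y) = ψ x * ψ y) ∧ ψ ≠ 0 ∧
      ∀ c : C, ψ (c : B) = φ c := by
  obtain ⟨c₀, hc₀⟩ := LinearMap.surjective_iff_ne_zero.mpr hφne 1
  have hLeft b c hc := (hIdeal b c hc).1
  have hRight b c hc := (hIdeal b c hc).2
  exact ⟨extendCharacter C hRight φ c₀, extendCharacter_mul hLeft hRight hφmul hc₀,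
    extendCharacter_ne_zero hRight hφmul hc₀, extendCharacter_coe hRight hφmul hc₀⟩

/-- if a Banach algebra `B` contains a Banach algebra `C` as a two-sided
ideal, then every character of `C` extends to a character of `B`. -/
theorem character_extends_from_ideal
    {B : Type*} [NormedRing B] [NormedAlgebra ℂ B] [CompleteSpace B]
    (C : NonUnitalSubalgebra ℂ B)
    (hIdeal : ∀ b : B, ∀ c ∈ C, b * c ∈ C ∧ c * b ∈ C)
    (φ : C →ₗ[ℂ] ℂ) (hφmul : ∀ x y : C, φ (x * y) = φ x * φ y) (hφne : φ ≠ 0) :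
    ∃ ψ : B →ₗ[ℂ] ℂ, (∀ x y : B, ψ (x * y) = ψ x * ψ y) ∧ ψ ≠ 0 ∧
      ∀ c : C, ψ (c : B) = φ c :=
  character_extends_from_ideal_general C hIdeal φ hφmul hφne
end
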